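/- arXiv:2408.04615 — 11 statements merged into one kernel-verified Lean document; each statement's English description precedes it below -/
import Mathlib

section
/- Let (U, S) be a set system and S ∈ S a solution with at least 2 minimal removable sets. Then every maximal proper subset solution of S is pairwise disjoint from the others AND every minimal removable set of S is pairwise disjoint from the others if and only if S has exactly 2 minimal removable sets and these two sets partition S. -/
variable {α : Type*}

/-- `X` is a maximal proper subset solution (MaxPSS) of `C` in the set system `𝒮`. -/
def IsMaxPSS (𝒮 : Set (Set α)) (C X : Set α) : Prop :=
  X ∈ 𝒮 ∧ X ⊂ C ∧ ∀ Z ∈ 𝒮, Z ⊂ C → X ⊆ Z → Z = X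

/-- `Y` is a removable set (RS) of `C`. -/
def IsRS (𝒮 : Set (Set α)) (C Y : Set α) : Prop :=
  Y.Nonempty ∧ Y ⊆ C ∧ C \ Y ∈ 𝒮

/-- `Y` is a minimal removable set (MinRS) of `C`. -/
def IsMinRS (𝒮 : Set (Set α)) (C Y : Set α) : Prop :=
  IsRS 𝒮 C Y ∧ ∀ Z, IsRS 𝒮 C Z → Z ⊆ Y → Z = Y

/-- All MaxPSSs of `S` are pairwise disjoint. -/
def MaxPSSDisjoint (𝒮 : Set (Set α)) (S : Set α) : Prop :=
  ∀ X X', IsMaxPSS 𝒮 S X → IsMaxPSS 𝒮 S X' → X ≠ X' → X ∩ X' = ∅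

/-- All MinRSs of `S` are pairwise disjoint. -/
def MinRSDisjoint (𝒮 : Set (Set α)) (S : Set α) : Prop :=
  ∀ Y Y', IsMinRS 𝒮 S Y → IsMinRS 𝒮 S Y' → Y ≠ Y' → Y ∩ Y' = ∅

/-- Superset-Subset-Disjoint (SSD) system. -/
def IsSSD (𝒮 : Set (Set α)) : Prop :=
  ∀ S ∈ 𝒮, ∀ S' ∈ 𝒮, S' ⊂ S → ∀ Y, IsMinRS 𝒮 S Y →
    S' ⊆ Y ∨ Y ⊆ S' ∨ Y ∩ S' = ∅

lemma minRS_compl_maxPSS {𝒮 : Set (Set α)} {S Y : Set α}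
    (h : IsMinRS 𝒮 S Y) : IsMaxPSS 𝒮 S (S \ Y) := by
  obtain ⟨⟨hne, hYS, hmem⟩, hmin⟩ := h
  refine ⟨hmem, ⟨Set.diff_subset, ?_⟩, ?_⟩
  · intro hsub
    obtain ⟨y, hy⟩ := hne
    exact (hsub (hYS hy)).2 hy
  · intro Z hZ hZS hsub
    have hW : IsRS 𝒮 S (S \ Z) := by
      refine ⟨Set.diff_nonempty.mpr (fun h => hZS.2 h), Set.diff_subset, ?_⟩
      rwa [Set.diff_diff_cancel_left hZS.1]
    have hWY : S \ Z ⊆ Y := by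
      intro w hw
      by_contra hwY
      exact hw.2 (hsub ⟨hw.1, hwY⟩)
    have hEq := hmin _ hW hWY
    calc Z = S \ (S \ Z) := (Set.diff_diff_cancel_left hZS.1).symm
    _ = S \ Y := by rw [hEq]

lemma maxPSS_compl_minRS {𝒮 : Set (Set α)} {S X : Set α}
    (h : IsMaxPSS 𝒮 S X) : IsMinRS 𝒮 S (S \ X) := by
  obtain ⟨hmem, hXS, hmax⟩ := h
  refine ⟨⟨Set.diff_nonempty.mpr (fun h => hXS.2 h), Set.diff_subset, ?_⟩, ?_⟩
  · rwa [Set.diff_diff_cancel_left hXS.1]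
  · intro Z ⟨hZne, hZS, hZmem⟩ hsub
    have h1 : S \ Z ⊂ S := by
      refine ⟨Set.diff_subset, fun hc => ?_⟩
      obtain ⟨z, hz⟩ := hZne
      exact (hc (hZS hz)).2 hz
    have h2 : X ⊆ S \ Z := by
      intro x hx
      refine ⟨hXS.1 hx, fun hxZ => (hsub hxZ).2 hx⟩
    have hEq := hmax _ hZmem h1 h2
    calc Z = S \ (S \ Z) := (Set.diff_diff_cancel_left hZS).symm
    _ = S \ X := by rw [hEq]

theorem stmt_0 (𝒮 : Set (Set α)) (S : Set α) (hS : S ∈ 𝒮)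
    (h2 : ∃ Y Y', IsMinRS 𝒮 S Y ∧ IsMinRS 𝒮 S Y' ∧ Y ≠ Y') :
    (MaxPSSDisjoint 𝒮 S ∧ MinRSDisjoint 𝒮 S) ↔
      (∃ Y₁ Y₂, IsMinRS 𝒮 S Y₁ ∧ IsMinRS 𝒮 S Y₂ ∧ Y₁ ≠ Y₂ ∧
        (∀ Y, IsMinRS 𝒮 S Y → Y = Y₁ ∨ Y = Y₂) ∧
        Y₁ ∩ Y₂ = ∅ ∧ Y₁ ∪ Y₂ = S) := by
  constructor
  · rintro ⟨hMax, hMin⟩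
    obtain ⟨Y, Y', hY, hY', hne⟩ := h2
    have hYS := hY.1.2.1
    have hY'S := hY'.1.2.1
    have hcompne : S \ Y ≠ S \ Y' := by
      intro hc
      apply hne
      calc Y = S \ (S \ Y) := (Set.diff_diff_cancel_left hYS).symm
      _ = S \ (S \ Y') := by rw [hc]
      _ = Y' := Set.diff_diff_cancel_left hY'S
    have hdisj := hMax _ _ (minRS_compl_maxPSS hY) (minRS_compl_maxPSS hY') hcompne
    have hcover : Y ∪ Y' = S := by
      apply Set.Subset.antisymm (Set.union_subset hYS hY'S)
      intro s hs
      by_contra hsu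
      simp only [Set.mem_union, not_or] at hsu
      exact (Set.eq_empty_iff_forall_notMem.mp hdisj s) ⟨⟨hs, hsu.1⟩, ⟨hs, hsu.2⟩⟩
    refine ⟨Y, Y', hY, hY', hne, ?_, hMin _ _ hY hY' hne, hcover⟩
    intro Z hZ
    by_contra hc
    push_neg at hc
    obtain ⟨z, hz⟩ := hZ.1.1
    have hzS : z ∈ S := hZ.1.2.1 hz
    rw [← hcover] at hzS
    cases hzS with
    | inl h =>
      exact (Set.eq_empty_iff_forall_notMem.mp (hMin _ _ hZ hY hc.1) z) ⟨hz, h⟩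
    | inr h =>
      exact (Set.eq_empty_iff_forall_notMem.mp (hMin _ _ hZ hY' hc.2) z) ⟨hz, h⟩
  · rintro ⟨Y₁, Y₂, hY₁, hY₂, hne, huniq, hdisj, hcover⟩
    have key : MinRSDisjoint 𝒮 S := by
      intro Y Y' hY hY' hne'
      rcases huniq _ hY with rfl | rfl <;> rcases huniq _ hY' with rfl | rfl
      · exact absurd rfl hne'
      · exact hdisj
      · rw [Set.inter_comm]; exact hdisj
      · exact absurd rfl hne'
    refine ⟨?_, key⟩
    have hcomp : ∀ X, IsMaxPSS 𝒮 S X → X = Y₂ ∨ X = Y₁ := by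
      intro X hX
      have hXS := hX.2.1.1
      have hXeq : X = S \ (S \ X) := (Set.diff_diff_cancel_left hXS).symm
      have hd : Disjoint Y₁ Y₂ := Set.disjoint_iff_inter_eq_empty.mpr hdisj
      rcases huniq _ (maxPSS_compl_minRS hX) with h | h
      · left
        rw [hXeq, h, ← hcover, Set.union_diff_cancel_left hd.le_bot]
      · right
        rw [hXeq, h, ← hcover, Set.union_diff_cancel_right hd.le_bot]
    intro X X' hX hX' hne'
    rcases hcomp _ hX with rfl | rfl <;> rcases hcomp _ hX' with rfl | rfl
    · exact absurd rfl hne'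
    · rw [Set.inter_comm]; exact hdisj
    · exact hdisj
    · exact absurd rfl hne'
end

section
/- Let (U, S) be an SSD system and S ∈ S a solution with at least 2 maximal proper subset solutions. If some two distinct MaxPSSs X, X' of S have nonempty intersection, then the union of any two distinct MaxPSSs of S equals S. -/
variable {α : Type*}

/-- The complement of a MaxPSS is a MinRS. -/
lemma compl_isMinRS (𝒮 : Set (Set α)) (S X : Set α)
    (hX : IsMaxPSS 𝒮 S X) : IsMinRS 𝒮 S (S \ X) := by
  obtain ⟨hXmem, hXsub, hXmax⟩ := hX
  refine ⟨⟨?_, Set.diff_subset, ?_⟩, ?_⟩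
  · rw [Set.nonempty_iff_ne_empty]
    intro h
    exact hXsub.2 (Set.diff_eq_empty.mp h)
  · rw [Set.diff_diff_cancel_left hXsub.1]
    exact hXmem
  · rintro Z ⟨hZne, hZsub, hZmem⟩ hZY
    have h1 : X ⊆ S \ Z := fun a ha => ⟨hXsub.1 ha, fun hz => (hZY hz).2 ha⟩
    have h2 : S \ Z ⊂ S := by
      refine ⟨Set.diff_subset, fun h => ?_⟩
      obtain ⟨a, ha⟩ := hZne
      exact (h (hZsub ha)).2 ha
    have h3 := hXmax (S \ Z) hZmem h2 h1
    rw [← h3, Set.diff_diff_cancel_left hZsub]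

/-- Trichotomy between two MaxPSSs of an SSD system. -/
lemma maxPSS_tri (𝒮 : Set (Set α)) (hSSD : IsSSD 𝒮) (S : Set α) (hS : S ∈ 𝒮)
    (Z X : Set α) (hZ : IsMaxPSS 𝒮 S Z) (hX : IsMaxPSS 𝒮 S X) :
    Z = X ∨ Z ∪ X = S ∨ Z ∩ X = ∅ := by
  have hY := compl_isMinRS 𝒮 S Z hZ
  rcases hSSD S hS X hX.1 hX.2.1 (S \ Z) hY with h | h | h
  · right; right
    ext a
    simp only [Set.mem_inter_iff, Set.mem_empty_iff_false, iff_false, not_and]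
    intro haZ haX
    exact (h haX).2 haZ
  · right; left
    refine Set.Subset.antisymm (Set.union_subset hZ.2.1.1 hX.2.1.1) (fun a ha => ?_)
    by_cases hz : a ∈ Z
    · exact Or.inl hz
    · exact Or.inr (h ⟨ha, hz⟩)
  · left
    have hXZ : X ⊆ Z := by
      intro a ha
      by_contra hz
      have : a ∈ (S \ Z) ∩ X := ⟨⟨hX.2.1.1 ha, hz⟩, ha⟩
      rw [h] at this
      exact this
    exact hX.2.2 Z hZ.1 hZ.2.1 hXZ

theorem stmt_1 (𝒮 : Set (Set α)) (hSSD : IsSSD 𝒮) (S : Set α) (hS : S ∈ 𝒮)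
    (X X' : Set α) (hX : IsMaxPSS 𝒮 S X) (hX' : IsMaxPSS 𝒮 S X')
    (hne : X ≠ X') (hint : (X ∩ X').Nonempty) :
    ∀ Z Z', IsMaxPSS 𝒮 S Z → IsMaxPSS 𝒮 S Z' → Z ≠ Z' → Z ∪ Z' = S := by
  -- membership form of disjointness
  have dis : ∀ A B : Set α, A ∩ B = ∅ → ∀ a, a ∈ A → a ∉ B := by
    intro A B h a ha hb
    have : a ∈ A ∩ B := ⟨ha, hb⟩
    rw [h] at this
    exact this
  -- if A ⊆ S = B ∪ C and A ∩ B = ∅ then A ⊆ C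
  have sub_of : ∀ A B C : Set α, A ⊆ S → B ∪ C = S → A ∩ B = ∅ → A ⊆ C := by
    intro A B C hA hun hd a ha
    have : a ∈ B ∪ C := by rw [hun]; exact hA ha
    rcases this with h | h
    · exact absurd h (dis A B hd a ha)
    · exact h
  have hXX' : X ∪ X' = S := by
    rcases maxPSS_tri 𝒮 hSSD S hS X X' hX hX' with h | h | h
    · exact absurd h hne
    · exact h
    · exact absurd h hint.ne_empty
  intro Z Z' hZ hZ' hzz
  have hZne : Z.Nonempty := by
    rw [Set.nonempty_iff_ne_empty]
    rintro rfl
    exact hzz (hZ.2.2 Z' hZ'.1 hZ'.2.1 (Set.empty_subset _)).symm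
  have hZ'ne : Z'.Nonempty := by
    rw [Set.nonempty_iff_ne_empty]
    rintro rfl
    exact hzz (hZ'.2.2 Z hZ.1 hZ.2.1 (Set.empty_subset _))
  rcases maxPSS_tri 𝒮 hSSD S hS Z Z' hZ hZ' with h | h | hd
  · exact absurd h hzz
  · exact h
  -- hd : Z ∩ Z' = ∅
  have hd' : Z' ∩ Z = ∅ := by rw [Set.inter_comm]; exact hd
  rcases maxPSS_tri 𝒮 hSSD S hS Z X hZ hX with h1 | h1 | h1
  · -- Z = X
    subst h1
    rcases maxPSS_tri 𝒮 hSSD S hS Z' X' hZ' hX' with h2 | h2 | h2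
    · subst h2
      exact absurd hd hint.ne_empty
    · -- Z' ∪ X' = S : then Z ⊆ X' so X' = Z = X, contra hne
      have hsub : Z ⊆ X' := sub_of Z Z' X' hZ.2.1.1 h2 hd
      exact absurd (hZ.2.2 X' hX'.1 hX'.2.1 hsub).symm hne
    · -- Z' ∩ X' = ∅ and Z' ∩ X = Z' ∩ Z = ∅ ⇒ Z' ⊆ ∅
      have hsub : Z' ⊆ X' := sub_of Z' Z X' hZ'.2.1.1 hXX' hd'
      obtain ⟨a, ha⟩ := hZ'ne
      exact absurd (hsub ha) (dis Z' X' h2 a ha)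
  · -- Z ∪ X = S : Z' ⊆ X, so X = Z', goal Z ∪ Z' = S
    have hsub : Z' ⊆ X := sub_of Z' Z X hZ'.2.1.1 h1 hd'
    have := hZ'.2.2 X hX.1 hX.2.1 hsub
    rw [← this]
    exact h1
  · -- Z ∩ X = ∅
    rcases maxPSS_tri 𝒮 hSSD S hS Z X' hZ hX' with h2 | h2 | h2
    · -- Z = X'
      rcases maxPSS_tri 𝒮 hSSD S hS Z' X hZ' hX with h3 | h3 | h3
      · refine absurd ?_ hint.ne_empty
        rw [← h3, ← h2]
        exact hd'
      · -- Z' ∪ X = S : Z ⊆ X, but Z ∩ X = ∅, Z nonempty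
        have hsub : Z ⊆ X := sub_of Z Z' X hZ.2.1.1 h3 hd
        obtain ⟨a, ha⟩ := hZne
        exact absurd (hsub ha) (dis Z X h1 a ha)
      · -- Z' ∩ X = ∅ and Z' ∩ X'(=Z) = ∅ ⇒ Z' empty
        have hsub : Z' ⊆ X' := sub_of Z' X X' hZ'.2.1.1 hXX' h3
        rw [← h2] at hsub
        obtain ⟨a, ha⟩ := hZ'ne
        exact absurd (hsub ha) (dis Z' Z hd' a ha)
    · -- Z ∪ X' = S : Z' ⊆ X', so X' = Z'
      have hsub : Z' ⊆ X' := sub_of Z' Z X' hZ'.2.1.1 h2 hd'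
      have := hZ'.2.2 X' hX'.1 hX'.2.1 hsub
      rw [← this]
      exact h2
    · -- Z ∩ X = ∅ and Z ∩ X' = ∅ ⇒ Z empty
      have hsub : Z ⊆ X' := sub_of Z X X' hZ.2.1.1 hXX' h1
      obtain ⟨a, ha⟩ := hZne
      exact absurd (hsub ha) (dis Z X' h2 a ha)
end

section
/- Let (U, S) be an SSD system and S ∈ S a solution with at least 2 maximal proper subset solutions. If some two distinct MaxPSSs X, X' of S are disjoint, then all MaxPSSs of S are pairwise disjoint. -/
variable {α : Type*}

theorem compl_MinRS (𝒮 : Set (Set α)) (S : Set α) (hS : S ∈ 𝒮) (X : Set α)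
    (hX : IsMaxPSS 𝒮 S X) : IsMinRS 𝒮 S (S \ X) := by
  obtain ⟨hXm, hXsub, hXmax⟩ := hX
  refine ⟨⟨Set.diff_nonempty.2 (fun h => hXsub.2 h), Set.diff_subset, ?_⟩, ?_⟩
  · rwa [Set.diff_diff_cancel_left hXsub.1]
  · rintro Z ⟨hZne, hZS, hZm⟩ hZsub
    have hSZ : S \ Z ⊂ S := by
      constructor
      · exact Set.diff_subset
      · intro h
        obtain ⟨a, ha⟩ := hZne
        exact (h (hZS ha)).2 ha
    have hXsz : X ⊆ S \ Z := fun a ha =>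
      ⟨hXsub.1 ha, fun haZ => (hZsub haZ).2 ha⟩
    have := hXmax (S \ Z) hZm hSZ hXsz
    have : Z = S \ X := by
      rw [← this, Set.diff_diff_cancel_left hZS]
    exact this

theorem key_lem (𝒮 : Set (Set α)) (hSSD : IsSSD 𝒮) (S : Set α) (hS : S ∈ 𝒮)
    (A B : Set α) (hA : IsMaxPSS 𝒮 S A) (hB : IsMaxPSS 𝒮 S B) (hne : A ≠ B) :
    A ∩ B = ∅ ∨ S \ B ⊆ A := by
  have hYB := compl_MinRS 𝒮 S hS B hB
  rcases hSSD S hS A hA.1 hA.2.1 (S \ B) hYB with h | h | h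
  · left
    ext a; simp only [Set.mem_inter_iff, Set.mem_empty_iff_false, iff_false]
    rintro ⟨haA, haB⟩; exact (h haA).2 haB
  · right; exact h
  · exfalso
    have hAB : A ⊆ B := fun a ha => by
      by_contra haB
      have : a ∈ (S \ B) ∩ A := ⟨⟨hA.2.1.1 ha, haB⟩, ha⟩
      rw [h] at this; exact this
    exact hne ((hA.2.2 B hB.1 hB.2.1 hAB).symm)

theorem stmt_2 (𝒮 : Set (Set α)) (hSSD : IsSSD 𝒮) (S : Set α) (hS : S ∈ 𝒮)
    (X X' : Set α) (hX : IsMaxPSS 𝒮 S X) (hX' : IsMaxPSS 𝒮 S X')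
    (hne : X ≠ X') (hdisj : X ∩ X' = ∅) :
    MaxPSSDisjoint 𝒮 S := by
  intro A B hA hB hAB
  by_contra h
  -- from key_lem both ways
  have h1 : S \ B ⊆ A := by
    rcases key_lem 𝒮 hSSD S hS A B hA hB hAB with h' | h'
    · exact absurd h' h
    · exact h'
  have h2 : S \ A ⊆ B := by
    rcases key_lem 𝒮 hSSD S hS B A hB hA (Ne.symm hAB) with h' | h'
    · exact absurd (by rw [Set.inter_comm] at h'; exact h') h
    · exact h'
  have hX'sub : X' ⊆ S \ X := fun a ha =>
    ⟨hX'.2.1.1 ha, fun haX => by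
      have : a ∈ X ∩ X' := ⟨haX, ha⟩
      rw [hdisj] at this; exact this⟩
  have hXsub : X ⊆ S \ X' := fun a ha =>
    ⟨hX.2.1.1 ha, fun haX => by
      have : a ∈ X ∩ X' := ⟨ha, haX⟩
      rw [hdisj] at this; exact this⟩
  -- we show A ∩ B = ∅ in all cases, contradicting h
  apply h
  by_cases hAX : A = X
  · -- X' ⊆ S \ X = S \ A ⊆ B, so B = X'
    have hB' : B = X' := hX'.2.2 B hB.1 hB.2.1 (fun a ha => h2 (hAX ▸ hX'sub ha))
    rw [hAX, hB']; exact hdisj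
  · rcases key_lem 𝒮 hSSD S hS X A hX hA (fun hh => hAX hh.symm) with h3 | h3
    · -- X ∩ A = ∅ : X ⊆ S \ A ⊆ B, so B = X
      have hXsA : X ⊆ S \ A := fun a ha =>
        ⟨hX.2.1.1 ha, fun haA => by
          have : a ∈ X ∩ A := ⟨ha, haA⟩
          rw [h3] at this; exact this⟩
      have hBX : B = X := hX.2.2 B hB.1 hB.2.1 (fun a ha => h2 (hXsA ha))
      -- X' ⊆ S \ X = S \ B ⊆ A, so A = X'
      have hAX' : A = X' := hX'.2.2 A hA.1 hA.2.1
        (fun a ha => h1 (hBX ▸ hX'sub ha))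
      rw [hBX, hAX', Set.inter_comm]; exact hdisj
    · -- S \ A ⊆ X, hence S \ X ⊆ A, X' ⊆ A, A = X'
      have hSXA : S \ X ⊆ A := by
        intro a ha
        by_contra haA
        exact ha.2 (h3 ⟨ha.1, haA⟩)
      have hAX' : A = X' := hX'.2.2 A hA.1 hA.2.1 (fun a ha => hSXA (hX'sub ha))
      -- X ⊆ S \ X' = S \ A ⊆ B, B = X
      have hBX : B = X := hX.2.2 B hB.1 hB.2.1
        (fun a ha => h2 (hAX' ▸ hXsub ha))
      rw [hAX', hBX, Set.inter_comm]; exact hdisj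
end

section
/- In an SSD system (U, S), every solution S ∈ S is MaxPSS-disjoint and/or MinRS-disjoint; that is, either all maximal proper subset solutions of S are pairwise disjoint, or all minimal removable sets of S are pairwise disjoint (or both). -/
variable {α : Type*}

/-- The complement of a MinRS is a MaxPSS. -/
lemma aux_compl_maxPSS {𝒮 : Set (Set α)} {S Y : Set α} (hY : IsMinRS 𝒮 S Y) :
    IsMaxPSS 𝒮 S (S \ Y) := by
  obtain ⟨⟨hYne, hYS, hmem⟩, hmin⟩ := hY
  refine ⟨hmem, ⟨Set.diff_subset, fun h => ?_⟩, ?_⟩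
  · obtain ⟨y, hy⟩ := hYne
    exact (h (hYS hy)).2 hy
  · intro Z hZ hZS hsub
    have hRS : IsRS 𝒮 S (S \ Z) :=
      ⟨Set.diff_nonempty.mpr hZS.not_subset, Set.diff_subset,
        by rwa [Set.diff_diff_cancel_left hZS.1]⟩
    have hsub2 : S \ Z ⊆ Y := by
      intro a ha
      by_contra hna
      exact ha.2 (hsub ⟨ha.1, hna⟩)
    have h := hmin _ hRS hsub2
    rw [← h, Set.diff_diff_cancel_left hZS.1]

/-- The complement of a MaxPSS is a MinRS. -/
lemma aux_compl_minRS {𝒮 : Set (Set α)} {S X : Set α} (hS : S ∈ 𝒮)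
    (hX : IsMaxPSS 𝒮 S X) : IsMinRS 𝒮 S (S \ X) := by
  obtain ⟨hXmem, hXS, hmax⟩ := hX
  have hXsub := hXS.1
  refine ⟨⟨Set.diff_nonempty.mpr hXS.not_subset, Set.diff_subset,
    by rwa [Set.diff_diff_cancel_left hXsub]⟩, ?_⟩
  rintro Z ⟨hZne, hZS, hZmem⟩ hsub
  have h1 : X ⊆ S \ Z := fun a ha => ⟨hXsub ha, fun hz => (hsub hz).2 ha⟩
  obtain ⟨z, hz⟩ := hZne
  have h2 : S \ Z ⊂ S := ⟨Set.diff_subset, fun h => (h (hZS hz)).2 hz⟩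
  have h := hmax (S \ Z) hZmem h2 h1
  rw [← h, Set.diff_diff_cancel_left hZS]

/-- Two distinct intersecting MinRSs cover S. -/
lemma aux_minRS_union {𝒮 : Set (Set α)} (hSSD : IsSSD 𝒮) {S Y Y' : Set α}
    (hS : S ∈ 𝒮) (hY : IsMinRS 𝒮 S Y) (hY' : IsMinRS 𝒮 S Y') (hne : Y ≠ Y')
    (hint : (Y ∩ Y').Nonempty) : Y ∪ Y' = S := by
  obtain ⟨y', hy'⟩ := hY'.1.1
  have hss : S \ Y' ⊂ S := ⟨Set.diff_subset, fun h => (h (hY'.1.2.1 hy')).2 hy'⟩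
  rcases hSSD S hS (S \ Y') hY'.1.2.2 hss Y hY with h | h | h
  · apply Set.Subset.antisymm (Set.union_subset hY.1.2.1 hY'.1.2.1)
    intro s hs
    by_cases hsy' : s ∈ Y'
    · exact Or.inr hsy'
    · exact Or.inl (h ⟨hs, hsy'⟩)
  · obtain ⟨a, ha, ha'⟩ := hint
    exact absurd ha' (h ha).2
  · exfalso
    apply hne
    apply hY'.2 Y hY.1
    intro a ha
    by_contra hna
    have : a ∈ Y ∩ (S \ Y') := ⟨ha, hY.1.2.1 ha, hna⟩
    rw [h] at this
    exact this

/-- Classification of a MaxPSS relative to two distinct intersecting MinRSs. -/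
lemma aux_classify {𝒮 : Set (Set α)} (hSSD : IsSSD 𝒮) {S X Y Y' : Set α}
    (hS : S ∈ 𝒮) (hX : IsMaxPSS 𝒮 S X) (hY : IsMinRS 𝒮 S Y) (hY' : IsMinRS 𝒮 S Y')
    (huni : Y ∪ Y' = S) :
    X = S \ Y ∨ X = S \ Y' ∨ X ⊆ Y ∩ Y' := by
  obtain ⟨hXmem, hXS, hmax⟩ := hX
  -- helper: Y'' ⊆ X implies S \ X equals the other MinRS
  have key : ∀ Y₁ Y₂ : Set α, IsMinRS 𝒮 S Y₁ → IsMinRS 𝒮 S Y₂ → Y₁ ∪ Y₂ = S →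
      Y₁ ⊆ X → X = S \ Y₂ := by
    intro Y₁ Y₂ hY₁ hY₂ huni₁₂ hsub
    have hRS : IsRS 𝒮 S (S \ X) :=
      ⟨Set.diff_nonempty.mpr hXS.not_subset, Set.diff_subset,
        by rwa [Set.diff_diff_cancel_left hXS.1]⟩
    have hsub2 : S \ X ⊆ Y₂ := by
      intro a ha
      have : a ∈ Y₁ ∪ Y₂ := huni₁₂ ▸ ha.1
      rcases this with h | h
      · exact absurd (hsub h) ha.2
      · exact h
    have h := hY₂.2 _ hRS hsub2
    rw [← h, Set.diff_diff_cancel_left hXS.1]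
  have key2 : ∀ Y₁ : Set α, IsMinRS 𝒮 S Y₁ → Y₁ ∩ X = ∅ → X = S \ Y₁ := by
    intro Y₁ hY₁ hdisj
    have hsub : X ⊆ S \ Y₁ := by
      intro a ha
      refine ⟨hXS.1 ha, fun h => ?_⟩
      have : a ∈ Y₁ ∩ X := ⟨h, ha⟩
      rw [hdisj] at this
      exact this
    exact (hmax (S \ Y₁) hY₁.1.2.2 ⟨Set.diff_subset, fun h => by
      obtain ⟨y, hy⟩ := hY₁.1.1
      exact (h (hY₁.1.2.1 hy)).2 hy⟩ hsub).symm
  rcases hSSD S hS X hXmem hXS Y hY with h1 | h1 | h1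
  · -- X ⊆ Y
    rcases hSSD S hS X hXmem hXS Y' hY' with h2 | h2 | h2
    · exact Or.inr (Or.inr (Set.subset_inter h1 h2))
    · exact Or.inl (key Y' Y hY' hY (by rw [Set.union_comm]; exact huni) h2)
    · exact Or.inr (Or.inl (key2 Y' hY' h2))
  · exact Or.inr (Or.inl (key Y Y' hY hY' huni h1))
  · exact Or.inl (key2 Y hY h1)

theorem stmt_3 (𝒮 : Set (Set α)) (hSSD : IsSSD 𝒮) :
    ∀ S ∈ 𝒮, MaxPSSDisjoint 𝒮 S ∨ MinRSDisjoint 𝒮 S := by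
  intro S hS
  by_cases hmin : MinRSDisjoint 𝒮 S
  · exact Or.inr hmin
  · left
    rw [MinRSDisjoint] at hmin
    push_neg at hmin
    obtain ⟨Y, Y', hY, hY', hne, hYint⟩ := hmin
    have hYint' : (Y ∩ Y').Nonempty := hYint
    have huni : Y ∪ Y' = S := aux_minRS_union hSSD hS hY hY' hne hYint'
    intro X X' hX hX' hXne
    by_contra hXint
    obtain ⟨x, hx, hx'⟩ := Set.nonempty_iff_ne_empty.mpr hXint
    have huni' : Y' ∪ Y = S := by rw [Set.union_comm]; exact huni
    have hc := aux_classify hSSD hS hX hY hY' huni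
    have hc' := aux_classify hSSD hS hX' hY hY' huni
    -- in case both are ⊆ Y ∩ Y', derive contradiction via complements
    have hboth : X ⊆ Y ∩ Y' → X' ⊆ Y ∩ Y' → False := by
      intro hs hs'
      have hB := aux_compl_minRS hS hX
      have hB' := aux_compl_minRS hS hX'
      have hBne : S \ X ≠ S \ X' := by
        intro h
        apply hXne
        rw [← Set.diff_diff_cancel_left hX.2.1.1, h,
          Set.diff_diff_cancel_left hX'.2.1.1]
      -- Y \ Y' is nonempty and inside both complements
      have hYsub : ¬ Y ⊆ Y' := fun h => hne (hY'.2 Y hY.1 h)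
      obtain ⟨y, hy, hy'⟩ := Set.not_subset.mp hYsub
      have hyS : y ∈ S := hY.1.2.1 hy
      have hyB : y ∈ (S \ X) ∩ (S \ X') :=
        ⟨⟨hyS, fun h => hy' (hs h).2⟩, ⟨hyS, fun h => hy' (hs' h).2⟩⟩
      have huniB := aux_minRS_union hSSD hS hB hB' hBne ⟨y, hyB⟩
      have hxS : x ∈ S := hX.2.1.1 hx
      rw [← huniB] at hxS
      rcases hxS with h | h
      · exact h.2 hx
      · exact h.2 hx'
    rcases hc with h | h | h <;> rcases hc' with h' | h' | h'
    · exact hXne (h.trans h'.symm)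
    · exact (h ▸ hx).2 ((huni ▸ (h' ▸ hx' : x ∈ S \ Y').1 : x ∈ Y ∪ Y').resolve_right (h' ▸ hx').2)
    · exact (h ▸ hx).2 (h' hx').1
    · exact (h' ▸ hx').2 ((huni ▸ (h ▸ hx : x ∈ S \ Y').1 : x ∈ Y ∪ Y').resolve_right (h ▸ hx).2)
    · exact hXne (h.trans h'.symm)
    · exact (h ▸ hx).2 (h' hx').2
    · exact (h' ▸ hx').2 (h hx).1
    · exact (h' ▸ hx').2 (h hx).2
    · exact hboth h h'
end

section
/- Let (U, S) be an SSD system and S ∈ S a solution with at least 2 minimal removable sets. If two distinct MinRSs Y, Y' of S satisfy Y ∪ Y' ⊊ S, then all MinRSs of S are pairwise disjoint. If Y ∪ Y' = S, then the union of any two distinct MinRSs of S equals S. -/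
variable {α : Type*}

/-- Dichotomy: two distinct MinRSs are disjoint or cover `S`. -/
lemma minRS_dichotomy {𝒮 : Set (Set α)} (hSSD : IsSSD 𝒮) {S : Set α} (hS : S ∈ 𝒮)
    {Z Z' : Set α} (hZ : IsMinRS 𝒮 S Z) (hZ' : IsMinRS 𝒮 S Z') (hne : Z ≠ Z') :
    Z ∩ Z' = ∅ ∨ Z ∪ Z' = S := by
  have hZsub := hZ.1.2.1
  have hZ'ne := hZ'.1.1
  have hZ'sub := hZ'.1.2.1
  have hZ'mem := hZ'.1.2.2
  have hprop : S \ Z' ⊂ S := by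
    constructor
    · exact Set.diff_subset
    · intro h
      obtain ⟨x, hx⟩ := hZ'ne
      exact (h (hZ'sub hx)).2 hx
  rcases hSSD S hS (S \ Z') hZ'mem hprop Z hZ with h | h | h
  · right
    apply Set.Subset.antisymm (Set.union_subset hZsub hZ'sub)
    intro x hx
    by_cases hxZ' : x ∈ Z'
    · exact Or.inr hxZ'
    · exact Or.inl (h ⟨hx, hxZ'⟩)
  · left
    ext x; simp only [Set.mem_inter_iff, Set.mem_empty_iff_false, iff_false]
    rintro ⟨hx1, hx2⟩
    exact (h hx1).2 hx2
  · exfalso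
    apply hne
    apply hZ'.2 Z hZ.1
    intro x hx
    by_contra hxZ'
    exact (Set.eq_empty_iff_forall_notMem.mp h x) ⟨hx, ⟨hZsub hx, hxZ'⟩⟩

/-- If two disjoint MinRSs do not cover `S`, no MinRS together with one of them covers `S`. -/
lemma minRS_union_ne {𝒮 : Set (Set α)} {S Y Y' Z : Set α}
    (hY' : IsMinRS 𝒮 S Y') (hZ : IsMinRS 𝒮 S Z)
    (hdisj : Y ∩ Y' = ∅) (hne : Y ∪ Y' ≠ S) : Z ∪ Y ≠ S := by
  intro h
  have hY'Z : Y' ⊆ Z := by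
    intro x hx
    have hxS : x ∈ S := hY'.1.2.1 hx
    rw [← h] at hxS
    rcases hxS with h1 | h1
    · exact h1
    · exact absurd (Set.mem_inter h1 hx) (by rw [hdisj]; exact Set.notMem_empty x)
  have := hZ.2 Y' hY'.1 hY'Z
  apply hne
  rw [this, Set.union_comm]
  exact h

theorem stmt_4 (𝒮 : Set (Set α)) (hSSD : IsSSD 𝒮) (S : Set α) (hS : S ∈ 𝒮)
    (Y Y' : Set α) (hY : IsMinRS 𝒮 S Y) (hY' : IsMinRS 𝒮 S Y') (hne : Y ≠ Y') :
    (Y ∪ Y' ⊂ S → MinRSDisjoint 𝒮 S) ∧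
    (Y ∪ Y' = S →
      ∀ Z Z', IsMinRS 𝒮 S Z → IsMinRS 𝒮 S Z' → Z ≠ Z' → Z ∪ Z' = S) := by
  constructor
  · -- Part 1
    intro hYY' Z Z' hZ hZ' hZne
    have hdisjYY' : Y ∩ Y' = ∅ := by
      rcases minRS_dichotomy hSSD hS hY hY' hne with h | h
      · exact h
      · exact absurd h hYY'.ne
    have hdisjY'Y : Y' ∩ Y = ∅ := by rw [Set.inter_comm]; exact hdisjYY'
    have hneU : Y ∪ Y' ≠ S := hYY'.ne
    have hneU' : Y' ∪ Y ≠ S := by rw [Set.union_comm]; exact hneU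
    by_contra hcon
    have hcover : Z ∪ Z' = S := by
      rcases minRS_dichotomy hSSD hS hZ hZ' hZne with h | h
      · exact absurd h hcon
      · exact h
    -- Z ∪ Y ≠ S etc.
    have h1 : Z ∪ Y ≠ S := minRS_union_ne hY' hZ hdisjYY' hneU
    have h2 : Z' ∪ Y ≠ S := minRS_union_ne hY' hZ' hdisjYY' hneU
    have h3 : Z ∪ Y' ≠ S := minRS_union_ne hY hZ hdisjY'Y hneU'
    have h4 : Z' ∪ Y' ≠ S := minRS_union_ne hY hZ' hdisjY'Y hneU'
    have hZY : Z ≠ Y := by rintro rfl; exact h2 (by rw [Set.union_comm]; exact hcover)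
    have hZ'Y : Z' ≠ Y := by rintro rfl; exact h1 hcover
    have dZY : Z ∩ Y = ∅ := by
      rcases minRS_dichotomy hSSD hS hZ hY hZY with h | h
      · exact h
      · exact absurd h h1
    have dZ'Y : Z' ∩ Y = ∅ := by
      rcases minRS_dichotomy hSSD hS hZ' hY hZ'Y with h | h
      · exact h
      · exact absurd h h2
    obtain ⟨y, hy⟩ := hY.1.1
    have hyS : y ∈ S := hY.1.2.1 hy
    rw [← hcover] at hyS
    rcases hyS with h' | h'
    · exact (Set.eq_empty_iff_forall_notMem.mp dZY y) ⟨h', hy⟩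
    · exact (Set.eq_empty_iff_forall_notMem.mp dZ'Y y) ⟨h', hy⟩
  · -- Part 2
    intro hU Z Z' hZ hZ' hZne
    by_contra hcon
    have hdisjZ : Z ∩ Z' = ∅ := by
      rcases minRS_dichotomy hSSD hS hZ hZ' hZne with h | h
      · exact h
      · exact absurd h hcon
    have hdisjZ' : Z' ∩ Z = ∅ := by rw [Set.inter_comm]; exact hdisjZ
    have hcon' : Z' ∪ Z ≠ S := by rw [Set.union_comm]; exact hcon
    -- For any MinRS W, W ∪ Z ≠ S and W ∪ Z' ≠ S
    have hYZ : Y ∪ Z ≠ S := minRS_union_ne hZ' hY hdisjZ hcon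
    have hYZ' : Y ∪ Z' ≠ S := minRS_union_ne hZ hY hdisjZ' hcon'
    have hY'Z : Y' ∪ Z ≠ S := minRS_union_ne hZ' hY' hdisjZ hcon
    have hY'Z' : Y' ∪ Z' ≠ S := minRS_union_ne hZ hY' hdisjZ' hcon'
    -- equal-or-disjoint for each pair
    have key : ∀ W V : Set α, IsMinRS 𝒮 S W → IsMinRS 𝒮 S V → W ∪ V ≠ S →
        W ≠ V → W ∩ V = ∅ := by
      intro W V hW hV hWV hne'
      rcases minRS_dichotomy hSSD hS hW hV hne' with h | h
      · exact h
      · exact absurd h hWV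
    obtain ⟨z, hz⟩ := hZ.1.1
    have hzS : z ∈ S := hZ.1.2.1 hz
    obtain ⟨z', hz'⟩ := hZ'.1.1
    have hz'S : z' ∈ S := hZ'.1.2.1 hz'
    rw [← hU] at hzS hz'S
    have eqZ : Z = Y ∨ Z = Y' := by
      rcases hzS with h' | h'
      · left
        by_contra hne'
        exact (Set.eq_empty_iff_forall_notMem.mp
          (key Z Y hZ hY (by rwa [Set.union_comm]) hne') z) ⟨hz, h'⟩
      · right
        by_contra hne'
        exact (Set.eq_empty_iff_forall_notMem.mp
          (key Z Y' hZ hY' (by rwa [Set.union_comm]) hne') z) ⟨hz, h'⟩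
    have eqZ' : Z' = Y ∨ Z' = Y' := by
      rcases hz'S with h' | h'
      · left
        by_contra hne'
        exact (Set.eq_empty_iff_forall_notMem.mp
          (key Z' Y hZ' hY (by rwa [Set.union_comm]) hne') z') ⟨hz', h'⟩
      · right
        by_contra hne'
        exact (Set.eq_empty_iff_forall_notMem.mp
          (key Z' Y' hZ' hY' (by rwa [Set.union_comm]) hne') z') ⟨hz', h'⟩
    rcases eqZ with rfl | rfl <;> rcases eqZ' with rfl | rfl
    · exact hZne rfl
    · exact hcon hU
    · exact hcon (by rw [Set.union_comm]; exact hU)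
    · exact hZne rfl
end

section
/- Let (U, S) be an SSD system and S ∈ S a solution with at least 2 minimal removable sets. If two distinct MinRSs of S intersect (have nonempty intersection), then the union of any two distinct MinRSs of S equals S. -/
variable {α : Type*}

lemma key_lemma (𝒮 : Set (Set α)) (hSSD : IsSSD 𝒮) (S : Set α) (hS : S ∈ 𝒮)
    (A B : Set α) (hA : IsMinRS 𝒮 S A) (hB : IsMinRS 𝒮 S B) (hne : A ≠ B)
    (hint : (A ∩ B).Nonempty) : S \ A ⊆ B := by
  have hsub : S \ A ⊂ S := by
    obtain ⟨a, ha⟩ := hA.1.1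
    refine ⟨Set.diff_subset, fun h => ?_⟩
    exact (h (hA.1.2.1 ha)).2 ha
  rcases hSSD S hS (S \ A) hA.1.2.2 hsub B hB with h | h | h
  · exact h
  · exfalso; obtain ⟨x, hxA, hxB⟩ := hint; exact (h hxB).2 hxA
  · exfalso
    have hBA : B ⊆ A := by
      intro x hx
      by_contra hxA
      have : x ∈ B ∩ (S \ A) := ⟨hx, hB.1.2.1 hx, hxA⟩
      rw [h] at this; exact this
    exact hne (hA.2 B hB.1 hBA).symm

lemma aux_false (𝒮 : Set (Set α)) (hSSD : IsSSD 𝒮) (S : Set α) (hS : S ∈ 𝒮)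
    (Y Y' : Set α) (hY : IsMinRS 𝒮 S Y) (hY' : IsMinRS 𝒮 S Y') (hne : Y ≠ Y')
    (hint : (Y ∩ Y').Nonempty)
    (Z Z' : Set α) (hZ : IsMinRS 𝒮 S Z) (hZ' : IsMinRS 𝒮 S Z')
    (hdisj : Z ∩ Z' = ∅) (x : α) (hxZ : x ∈ Z) (hxY : x ∈ Y) : False := by
  by_cases hZY : Z = Y
  · subst hZY
    obtain ⟨z', hz'⟩ := hZ'.1.1
    have hz'S : z' ∈ S := hZ'.1.2.1 hz'
    have hz'Z : z' ∉ Z := fun hc => by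
      have : z' ∈ Z ∩ Z' := ⟨hc, hz'⟩
      rw [hdisj] at this; exact this
    have hz'Y' : z' ∈ Y' := key_lemma 𝒮 hSSD S hS Z Y' hZ hY' hne hint ⟨hz'S, hz'Z⟩
    by_cases hZ'Y' : Z' = Y'
    · obtain ⟨y, hy1, hy2⟩ := hint
      have : y ∈ Z ∩ Z' := ⟨hy1, hZ'Y' ▸ hy2⟩
      rw [hdisj] at this; exact this
    · have h1 : S \ Z' ⊆ Y' :=
        key_lemma 𝒮 hSSD S hS Z' Y' hZ' hY' hZ'Y' ⟨z', hz', hz'Y'⟩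
      have h2 : Z ⊆ Y' := by
        intro a ha
        refine h1 ⟨hZ.1.2.1 ha, fun hc => ?_⟩
        have : a ∈ Z ∩ Z' := ⟨ha, hc⟩
        rw [hdisj] at this; exact this
      exact hne (hY'.2 Z hZ.1 h2)
  · have h1 : S \ Z ⊆ Y := key_lemma 𝒮 hSSD S hS Z Y hZ hY hZY ⟨x, hxZ, hxY⟩
    have h2 : Z' ⊆ Y := by
      intro a ha
      refine h1 ⟨hZ'.1.2.1 ha, fun hc => ?_⟩
      have : a ∈ Z ∩ Z' := ⟨hc, ha⟩
      rw [hdisj] at this; exact this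
    have h3 : Z' = Y := hY.2 Z' hZ'.1 h2
    have : x ∈ Z ∩ Z' := ⟨hxZ, h3 ▸ hxY⟩
    rw [hdisj] at this; exact this

theorem stmt_5 (𝒮 : Set (Set α)) (hSSD : IsSSD 𝒮) (S : Set α) (hS : S ∈ 𝒮)
    (Y Y' : Set α) (hY : IsMinRS 𝒮 S Y) (hY' : IsMinRS 𝒮 S Y') (hne : Y ≠ Y')
    (hint : (Y ∩ Y').Nonempty) :
    ∀ Z Z', IsMinRS 𝒮 S Z → IsMinRS 𝒮 S Z' → Z ≠ Z' → Z ∪ Z' = S := by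
  intro Z Z' hZ hZ' hzz
  by_cases h : (Z ∩ Z').Nonempty
  · have h1 : S \ Z ⊆ Z' := key_lemma 𝒮 hSSD S hS Z Z' hZ hZ' hzz h
    apply subset_antisymm (Set.union_subset hZ.1.2.1 hZ'.1.2.1)
    intro s hs
    by_cases hsZ : s ∈ Z
    · exact Or.inl hsZ
    · exact Or.inr (h1 ⟨hs, hsZ⟩)
  · exfalso
    have hdisj : Z ∩ Z' = ∅ := Set.not_nonempty_iff_eq_empty.mp h
    obtain ⟨x, hxZ⟩ := hZ.1.1
    have hxS : x ∈ S := hZ.1.2.1 hxZ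
    by_cases hxY : x ∈ Y
    · exact aux_false 𝒮 hSSD S hS Y Y' hY hY' hne hint Z Z' hZ hZ' hdisj x hxZ hxY
    · have hxY' : x ∈ Y' := key_lemma 𝒮 hSSD S hS Y Y' hY hY' hne hint ⟨hxS, hxY⟩
      exact aux_false 𝒮 hSSD S hS Y' Y hY' hY hne.symm
        (Set.inter_comm Y Y' ▸ hint) Z Z' hZ hZ' hdisj x hxZ hxY'
end

section
/- Let (U, S) be an SSD system and S ∈ S a solution. If some singleton {u} with u ∈ S is a removable set of S (i.e., S \ {u} ∈ S), then all minimal removable sets of S are pairwise disjoint. -/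
variable {α : Type*}

lemma minRS_mem_singleton (𝒮 : Set (Set α)) (hSSD : IsSSD 𝒮) (S : Set α) (hS : S ∈ 𝒮)
    (u : α) (hu : u ∈ S) (hrem : S \ {u} ∈ 𝒮)
    (Y : Set α) (hY : IsMinRS 𝒮 S Y) (huY : u ∈ Y) : Y = {u} := by
  have hss : S \ {u} ⊂ S := by
    constructor
    · exact Set.diff_subset
    · intro h
      exact (h hu).2 rfl
  rcases hSSD S hS (S \ {u}) hrem hss Y hY with h | h | h
  · -- {u} ⊆ Y, use minimality with Z = {u}
    have hZ : IsRS 𝒮 S {u} := ⟨⟨u, rfl⟩, Set.singleton_subset_iff.2 hu, hrem⟩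
    exact (hY.2 {u} hZ (Set.singleton_subset_iff.2 huY)).symm
  · exact absurd (h huY).2 (by simp)
  · apply Set.Subset.antisymm
    · intro x hx
      have hxS := hY.1.2.1 hx
      by_contra hxu
      have : x ∈ Y ∩ (S \ {u}) := ⟨hx, hxS, hxu⟩
      rw [h] at this
      exact this
    · exact Set.singleton_subset_iff.2 huY

lemma key_disjoint (𝒮 : Set (Set α)) (hSSD : IsSSD 𝒮) (S : Set α) (hS : S ∈ 𝒮)
    (u : α) (hu : u ∈ S) (hrem : S \ {u} ∈ 𝒮)
    (Y Y' : Set α) (hY : IsMinRS 𝒮 S Y) (hY' : IsMinRS 𝒮 S Y')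
    (hne : Y ≠ Y') (huY : u ∉ Y) : Y ∩ Y' = ∅ := by
  have hSY : S \ Y ∈ 𝒮 := hY.1.2.2
  have hss : S \ Y ⊂ S := by
    constructor
    · exact Set.diff_subset
    · intro h
      obtain ⟨y, hy⟩ := hY.1.1
      exact (h (hY.1.2.1 hy)).2 hy
  rcases hSSD S hS (S \ Y) hSY hss Y' hY' with h | h | h
  · -- S \ Y ⊆ Y', so u ∈ Y', so Y' = {u}, disjoint from Y
    have huY' : u ∈ Y' := h ⟨hu, huY⟩
    have := minRS_mem_singleton 𝒮 hSSD S hS u hu hrem Y' hY' huY'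
    rw [this]
    ext x
    simp only [Set.mem_inter_iff, Set.mem_singleton_iff, Set.mem_empty_iff_false, iff_false,
      not_and]
    rintro hx rfl
    exact huY hx
  · ext x
    simp only [Set.mem_inter_iff, Set.mem_empty_iff_false, iff_false, not_and]
    intro hx hx'
    exact (h hx').2 hx
  · -- Y' ∩ (S \ Y) = ∅ ⇒ Y' ⊆ Y ⇒ Y' = Y, contradiction
    exfalso
    apply hne
    symm
    apply hY.2 Y' hY'.1
    intro x hx
    by_contra hxY
    have : x ∈ Y' ∩ (S \ Y) := ⟨hx, hY'.1.2.1 hx, hxY⟩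
    rw [h] at this
    exact this

theorem stmt_7 (𝒮 : Set (Set α)) (hSSD : IsSSD 𝒮) (S : Set α) (hS : S ∈ 𝒮)
    (u : α) (hu : u ∈ S) (hrem : S \ {u} ∈ 𝒮) :
    MinRSDisjoint 𝒮 S := by
  intro Y Y' hY hY' hne
  by_cases huY : u ∈ Y
  · by_cases huY' : u ∈ Y'
    · exact absurd ((minRS_mem_singleton 𝒮 hSSD S hS u hu hrem Y hY huY).trans
        (minRS_mem_singleton 𝒮 hSSD S hS u hu hrem Y' hY' huY').symm) hne
    · rw [Set.inter_comm]
      exact key_disjoint 𝒮 hSSD S hS u hu hrem Y' Y hY' hY hne.symm huY'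
  · exact key_disjoint 𝒮 hSSD S hS u hu hrem Y Y' hY hY' hne huY
end

section
/- Every laminar set system is an SSD system. Moreover, in a laminar system, for any solutions S ⊋ S' and any minimal removable set Y of S, either Y ⊇ S' or Y ∩ S' = ∅. -/
variable {α : Type*}

theorem stmt_8 (𝒮 : Set (Set α))
    (hlam : ∀ A ∈ 𝒮, ∀ B ∈ 𝒮, A ∩ B = ∅ ∨ A ⊆ B ∨ B ⊆ A) :
    IsSSD 𝒮 ∧
    (∀ S ∈ 𝒮, ∀ S' ∈ 𝒮, S' ⊂ S → ∀ Y, IsMinRS 𝒮 S Y →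
      S' ⊆ Y ∨ Y ∩ S' = ∅) := by
  have key : ∀ S ∈ 𝒮, ∀ S' ∈ 𝒮, S' ⊂ S → ∀ Y, IsMinRS 𝒮 S Y →
      S' ⊆ Y ∨ Y ∩ S' = ∅ := by
    intro S hS S' hS' hss Y hY
    obtain ⟨⟨hYne, hYS, hSY⟩, hmin⟩ := hY
    rcases hlam S' hS' (S \ Y) hSY with h | h | h
    · left
      intro x hx
      have hxS := hss.1 hx
      by_contra hxY
      have : x ∈ S' ∩ (S \ Y) := ⟨hx, hxS, hxY⟩
      simp [h] at this
    · right
      ext x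
      simp only [Set.mem_inter_iff, Set.mem_empty_iff_false, iff_false, not_and]
      intro hxY hxS'
      exact (h hxS').2 hxY
    · right
      have hZ : IsRS 𝒮 S (S \ S') :=
        ⟨Set.diff_nonempty.mpr hss.2, Set.diff_subset,
          by rw [Set.diff_diff_cancel_left hss.1]; exact hS'⟩
      have hsub : S \ S' ⊆ Y := by
        intro x hx
        by_contra hxY
        exact hx.2 (h ⟨hx.1, hxY⟩)
      have hEq := hmin _ hZ hsub
      rw [← hEq]
      ext x
      simp only [Set.mem_inter_iff, Set.mem_diff, Set.mem_empty_iff_false, iff_false, not_and]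
      rintro ⟨_, hx⟩ hx'
      exact hx hx'
  refine ⟨?_, key⟩
  intro S hS S' hS' hss Y hY
  rcases key S hS S' hS' hss Y hY with h | h
  · exact Or.inl h
  · exact Or.inr (Or.inr h)
end

section
/- For any finite k ≥ 1 and any (di)graph G = (V, E), the k-edge-connected system S_{G,k} = {S ⊆ V : G[S] is k-edge-connected} is an SSD system: if S ⊋ S' are both in S_{G,k} and X is a maximal proper subset of S with G[X] k-edge-connected, then X ∩ S' = ∅, or X ∪ S' = S, or X ⊇ S'. -/
variable {V : Type*}

/-- Reachability within `S` using edges in the edge set `E'` whose endpoints lie in `S`. -/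
def ReachIn (E' : Set (V × V)) (S : Set V) : V → V → Prop :=
  Relation.ReflTransGen (fun a b => (a, b) ∈ E' ∧ a ∈ S ∧ b ∈ S)

/-- The subgraph induced by `S` with edge set `E'` is strongly connected. -/
def StrongConn (E' : Set (V × V)) (S : Set V) : Prop :=
  ∀ u ∈ S, ∀ v ∈ S, ReachIn E' S u v

/-- `G[S]` is `k`-edge-connected: `S` is nonempty and removing any fewer than `k`
edges leaves `G[S]` strongly connected (singletons are `k`-edge-connected for all `k`). -/
def KEdgeConn (E : Set (V × V)) (k : ℕ) (S : Set V) : Prop :=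
  S.Nonempty ∧ ∀ F : Finset (V × V), F.card < k → StrongConn (E \ ↑F) S

/-- `Y` is a removable set of `C` in the `k`-edge-connected system. -/
def IsRSk (E : Set (V × V)) (k : ℕ) (C Y : Set V) : Prop :=
  Y.Nonempty ∧ Y ⊆ C ∧ KEdgeConn E k (C \ Y)

/-- `Y` is a minimal removable set of `C` in the `k`-edge-connected system. -/
def IsMinRSk (E : Set (V × V)) (k : ℕ) (C Y : Set V) : Prop :=
  IsRSk E k C Y ∧ ∀ Z, IsRSk E k C Z → Z ⊆ Y → Z = Y


lemma reachIn_mono {E' : Set (V × V)} {A B : Set V} (hAB : A ⊆ B) {u v : V}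
    (h : ReachIn E' A u v) : ReachIn E' B u v := by
  induction h with
  | refl => exact Relation.ReflTransGen.refl
  | tail _ h ih => exact ih.tail ⟨h.1, hAB h.2.1, hAB h.2.2⟩

lemma kEdgeConn_union {E : Set (V × V)} {k : ℕ} {A B : Set V}
    (hA : KEdgeConn E k A) (hB : KEdgeConn E k B) (hAB : (A ∩ B).Nonempty) :
    KEdgeConn E k (A ∪ B) := by
  obtain ⟨w, hwA, hwB⟩ := hAB
  refine ⟨⟨w, Or.inl hwA⟩, fun F hF u hu v hv => ?_⟩
  have reach : ∀ x ∈ A ∪ B, ReachIn (E \ ↑F) (A ∪ B) x w ∧ ReachIn (E \ ↑F) (A ∪ B) w x := by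
    intro x hx
    rcases hx with hx | hx
    · exact ⟨reachIn_mono Set.subset_union_left (hA.2 F hF x hx w hwA),
        reachIn_mono Set.subset_union_left (hA.2 F hF w hwA x hx)⟩
    · exact ⟨reachIn_mono Set.subset_union_right (hB.2 F hF x hx w hwB),
        reachIn_mono Set.subset_union_right (hB.2 F hF w hwB x hx)⟩
  exact ((reach u hu).1).trans ((reach v hv).2)

theorem stmt_10 (E : Set (V × V)) (k : ℕ) (hk : 1 ≤ k)
    (S S' X : Set V) (hS : KEdgeConn E k S) (hS' : KEdgeConn E k S')
    (hss : S' ⊂ S)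
    (hXsol : KEdgeConn E k X) (hXS : X ⊂ S)
    (hXmax : ∀ Z, KEdgeConn E k Z → Z ⊂ S → X ⊆ Z → Z = X) :
    X ∩ S' = ∅ ∨ X ∪ S' = S ∨ S' ⊆ X := by
  by_cases h1 : X ∩ S' = ∅
  · exact Or.inl h1
  by_cases h2 : S' ⊆ X
  · exact Or.inr (Or.inr h2)
  have hU : KEdgeConn E k (X ∪ S') := kEdgeConn_union hXsol hS'
    (Set.nonempty_iff_ne_empty.2 h1)
  have hUsub : X ∪ S' ⊆ S := Set.union_subset hXS.subset hss.subset
  by_cases h3 : X ∪ S' = S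
  · exact Or.inr (Or.inl h3)
  · have := hXmax (X ∪ S') hU ⟨hUsub, fun h => h3 (le_antisymm hUsub h)⟩
      Set.subset_union_left
    exact absurd (this ▸ Set.subset_union_right : S' ⊆ X) h2
end

section
/- Let G = (V, E) be a k-edge-connected graph with |V| ≥ 2 that is MinRS-disjoint. Then for any non-edge e', the graph G + e' is also MinRS-disjoint (with respect to k-edge-connectivity). -/
variable {V : Type*}

/-- All MinRSs of `V` are pairwise disjoint (w.r.t. the `k`-edge-connected system). -/
def MinRSDisjK (E : Set (V × V)) (k : ℕ) : Prop :=
  ∀ Y Y', IsMinRSk E k Set.univ Y → IsMinRSk E k Set.univ Y' → Y ≠ Y' →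
    Y ∩ Y' = ∅

/-!
Two minimal removable sets `P ≠ Q` that meet must cover `V`: otherwise their complements
meet, so `(V \ P) ∪ (V \ Q) = V \ (P ∩ Q)` is `k`-edge-connected and `P ∩ Q` is a smaller
removable set. Hence, once two disjoint MinRSs `Y₁, Y₂` exist, a MinRS `A ≠ Y₁` meeting `Y₁`
would contain `V \ Y₁ ⊇ Y₂` and so cover `V` together with `Y₂` as well, forcing
`V \ A ⊆ Y₁ ∩ Y₂ = ∅`. So every MinRS meeting `Y₁` is `Y₁`; two distinct meeting MinRSs
cover `V`, so one of them meets `Y₁`, and then both are `Y₁`. Adding edges keeps removable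
sets removable, so the disjoint MinRSs of `G` contain disjoint MinRSs of `G + e'`.
-/

section

variable {E : Set (V × V)} {k : ℕ}

lemma ReachIn.mono {E₁ E₂ : Set (V × V)} {S T : Set V} (hE : E₁ ⊆ E₂) (hST : S ⊆ T)
    {u v : V} (h : ReachIn E₁ S u v) : ReachIn E₂ T u v :=
  Relation.ReflTransGen.mono (fun _ _ hab => ⟨hE hab.1, hST hab.2.1, hST hab.2.2⟩) u v h

lemma KEdgeConn.mono_edges {E₁ E₂ : Set (V × V)} {S : Set V} (hE : E₁ ⊆ E₂)
    (h : KEdgeConn E₁ k S) : KEdgeConn E₂ k S :=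
  ⟨h.1, fun F hF u hu v hv => (h.2 F hF u hu v hv).mono (Set.sdiff_subset_sdiff_left hE) le_rfl⟩

lemma kEdgeConn_singleton (v : V) : KEdgeConn E k {v} := by
  refine ⟨Set.singleton_nonempty v, fun F _ u hu w hw => ?_⟩
  rw [Set.mem_singleton_iff] at hu hw
  subst hu hw
  exact Relation.ReflTransGen.refl

lemma KEdgeConn.union {S T : Set V} (hS : KEdgeConn E k S) (hT : KEdgeConn E k T)
    (hST : (S ∩ T).Nonempty) : KEdgeConn E k (S ∪ T) := by
  obtain ⟨x, hxS, hxT⟩ := hST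
  refine ⟨⟨x, Or.inl hxS⟩, fun F hF u hu v hv => ?_⟩
  have hux : ReachIn (E \ ↑F) (S ∪ T) u x := by
    rcases hu with hu | hu
    · exact (hS.2 F hF u hu x hxS).mono le_rfl Set.subset_union_left
    · exact (hT.2 F hF u hu x hxT).mono le_rfl Set.subset_union_right
  have hxv : ReachIn (E \ ↑F) (S ∪ T) x v := by
    rcases hv with hv | hv
    · exact (hS.2 F hF x hxS v hv).mono le_rfl Set.subset_union_left
    · exact (hT.2 F hF x hxT v hv).mono le_rfl Set.subset_union_right
  exact hux.trans hxv

lemma IsRSk.mono_edges {E' : Set (V × V)} {C Y : Set V} (hE : E ⊆ E')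
    (hY : IsRSk E k C Y) : IsRSk E' k C Y :=
  ⟨hY.1, hY.2.1, hY.2.2.mono_edges hE⟩

lemma isRSk_compl_singleton {a b : V} (hab : a ≠ b) : IsRSk E k Set.univ {a}ᶜ := by
  refine ⟨⟨b, hab.symm⟩, Set.subset_univ _, ?_⟩
  rw [← Set.compl_eq_univ_sdiff, compl_compl]
  exact kEdgeConn_singleton a

lemma IsRSk.exists_isMinRSk_subset [Finite V] {Y : Set V} (hY : IsRSk E k Set.univ Y) :
    ∃ Z ⊆ Y, IsMinRSk E k Set.univ Z := by
  obtain ⟨Z, hZY, hZ⟩ := exists_minimal_le_of_wellFoundedLT (IsRSk E k Set.univ) Y hY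
  exact ⟨Z, hZY, hZ.1, fun W hW hWZ => hWZ.antisymm (hZ.2 hW hWZ)⟩

lemma exists_isMinRSk_not_mem [Finite V] {a b : V} (hab : a ≠ b) :
    ∃ Y, IsMinRSk E k Set.univ Y ∧ a ∉ Y := by
  obtain ⟨Y, hY, hYmin⟩ := (isRSk_compl_singleton (E := E) (k := k) hab).exists_isMinRSk_subset
  exact ⟨Y, hYmin, fun ha => hY ha rfl⟩

lemma IsMinRSk.compl_nonempty {Y : Set V} (hY : IsMinRSk E k Set.univ Y) :
    (Set.univ \ Y).Nonempty :=
  hY.1.2.2.1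

lemma IsMinRSk.union_eq_univ {P Q : Set V} (hP : IsMinRSk E k Set.univ P)
    (hQ : IsMinRSk E k Set.univ Q) (hPQ : (P ∩ Q).Nonempty) (hne : P ≠ Q) :
    P ∪ Q = Set.univ := by
  by_contra hcover
  obtain ⟨x, hx⟩ := (Set.ne_univ_iff_exists_notMem _).mp hcover
  have hcompl : ((Set.univ \ P) ∩ (Set.univ \ Q)).Nonempty :=
    ⟨x, ⟨trivial, fun h => hx (Or.inl h)⟩, trivial, fun h => hx (Or.inr h)⟩
  have hRS : IsRSk E k Set.univ (P ∩ Q) := by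
    refine ⟨hPQ, Set.subset_univ _, ?_⟩
    rw [Set.sdiff_inter]
    exact hP.1.2.2.union hQ.1.2.2 hcompl
  exact hne ((hP.2 _ hRS Set.inter_subset_left).symm.trans (hQ.2 _ hRS Set.inter_subset_right))

lemma IsMinRSk.eq_of_inter_nonempty {Y₁ Y₂ A : Set V} (hA : IsMinRSk E k Set.univ A)
    (h₁ : IsMinRSk E k Set.univ Y₁) (h₂ : IsMinRSk E k Set.univ Y₂) (h₁₂ : Y₁ ∩ Y₂ = ∅)
    (hA₁ : (A ∩ Y₁).Nonempty) : A = Y₁ := by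
  by_contra hne
  have hA₁cover := hA.union_eq_univ h₁ hA₁ hne
  have hY₂A : Y₂ ⊆ A := fun y hy =>
    (hA₁cover ▸ Set.mem_univ y : y ∈ A ∪ Y₁).resolve_right
      fun hy₁ => Set.eq_empty_iff_forall_notMem.mp h₁₂ y ⟨hy₁, hy⟩
  have hA₂ : (A ∩ Y₂).Nonempty := by
    obtain ⟨y, hy⟩ := h₂.1.1
    exact ⟨y, hY₂A hy, hy⟩
  have hA₂ne : A ≠ Y₂ := by
    rintro rfl
    exact hA₁.ne_empty (Set.inter_comm A Y₁ ▸ h₁₂)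
  have hA₂cover := hA.union_eq_univ h₂ hA₂ hA₂ne
  obtain ⟨x, -, hxA⟩ := hA.compl_nonempty
  have hx : x ∈ Y₁ ∩ Y₂ :=
    ⟨(hA₁cover ▸ Set.mem_univ x : x ∈ A ∪ Y₁).resolve_left hxA,
      (hA₂cover ▸ Set.mem_univ x : x ∈ A ∪ Y₂).resolve_left hxA⟩
  simp [h₁₂] at hx

lemma minRSDisjK_of_inter_eq_empty {Y₁ Y₂ : Set V} (h₁ : IsMinRSk E k Set.univ Y₁)
    (h₂ : IsMinRSk E k Set.univ Y₂) (h₁₂ : Y₁ ∩ Y₂ = ∅) : MinRSDisjK E k := by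
  intro A B hA hB hAB
  by_contra hmeet
  have hAB' : (A ∩ B).Nonempty := Set.nonempty_iff_ne_empty.mpr hmeet
  have hfix : ∀ P, IsMinRSk E k Set.univ P → (P ∩ Y₁).Nonempty → P = Y₁ :=
    fun P hP => hP.eq_of_inter_nonempty h₁ h₂ h₁₂
  obtain ⟨y, hy⟩ := h₁.1.1
  rcases (hA.union_eq_univ hB hAB' hAB ▸ Set.mem_univ y : y ∈ A ∪ B) with hyA | hyB
  · obtain rfl := hfix A hA ⟨y, hyA, hy⟩
    exact hAB (hfix B hB (Set.inter_comm A B ▸ hAB')).symm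
  · obtain rfl := hfix B hB ⟨y, hyB, hy⟩
    exact hAB (hfix A hA hAB')

lemma MinRSDisjK.mono [Finite V] {E' : Set (V × V)} (hE : E ⊆ E') (h : MinRSDisjK E k) :
    MinRSDisjK E' k := by
  intro A B hA hB hAB
  obtain ⟨a, haA⟩ := hA.1.1
  obtain ⟨b, -, hbA⟩ := hA.compl_nonempty
  have hab : a ≠ b := fun h => hbA (h ▸ haA)
  obtain ⟨Y₁, h₁, haY₁⟩ := exists_isMinRSk_not_mem (E := E) (k := k) hab
  obtain ⟨w, hw⟩ := h₁.1.1
  obtain ⟨Y₂, h₂, hwY₂⟩ :=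
    exists_isMinRSk_not_mem (E := E) (k := k) (fun h : w = a => haY₁ (h ▸ hw))
  have h₁₂ : Y₁ ∩ Y₂ = ∅ := h Y₁ Y₂ h₁ h₂ fun h => hwY₂ (h ▸ hw)
  obtain ⟨Z₁, hZY₁, hZ₁⟩ := (h₁.1.mono_edges hE).exists_isMinRSk_subset
  obtain ⟨Z₂, hZY₂, hZ₂⟩ := (h₂.1.mono_edges hE).exists_isMinRSk_subset
  have hZ₁₂ : Z₁ ∩ Z₂ = ∅ := Set.subset_empty_iff.mp (h₁₂ ▸ Set.inter_subset_inter hZY₁ hZY₂)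
  exact minRSDisjK_of_inter_eq_empty hZ₁ hZ₂ hZ₁₂ A B hA hB hAB

end

theorem stmt_17_general [Fintype V] (E : Set (V × V)) (k : ℕ)
    (hdisj : MinRSDisjK E k)
    (e' : V × V) :
    MinRSDisjK (insert e' E) k :=
  hdisj.mono (Set.subset_insert e' E)

theorem stmt_17 [Fintype V] (E : Set (V × V)) (k : ℕ)
    (hG : KEdgeConn E k Set.univ) (hcard : 2 ≤ Fintype.card V)
    (hdisj : MinRSDisjK E k)
    (e' : V × V) (he' : e' ∉ E) (hne : e'.1 ≠ e'.2) :
    MinRSDisjK (insert e' E) k :=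
  stmt_17_general E k hdisj e'
end

section
/- For any set system (U, S), any solution S ∈ S, any nonempty I ⊆ S that is not a removable-set-free case, and any minimal removable set Y of S disjoint from I, if (U, S) is an SSD system then the family of solutions S' with I ⊆ S' ⊆ S is the disjoint union of {solutions S' with I ⊆ S' ⊆ S \ Y} and {solutions S' with I ∪ Y ⊆ S' ⊆ S}, provided S is not MaxPSS-disjoint. -/
variable {α : Type*}

theorem stmt_19 (𝒮 : Set (Set α)) (hSSD : IsSSD 𝒮) (S : Set α) (hS : S ∈ 𝒮)
    (I : Set α) (hI : I.Nonempty) (hIS : I ⊆ S)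
    (Y : Set α) (hY : IsMinRS 𝒮 S Y) (hYI : Y ∩ I = ∅)
    (hnd : ¬ MaxPSSDisjoint 𝒮 S) :
    (∀ T, (T ∈ 𝒮 ∧ I ⊆ T ∧ T ⊆ S) ↔
        ((T ∈ 𝒮 ∧ I ⊆ T ∧ T ⊆ S \ Y) ∨ (T ∈ 𝒮 ∧ I ∪ Y ⊆ T ∧ T ⊆ S))) ∧
    (∀ T, ¬ ((T ∈ 𝒮 ∧ I ⊆ T ∧ T ⊆ S \ Y) ∧ (T ∈ 𝒮 ∧ I ∪ Y ⊆ T ∧ T ⊆ S))) := by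
  obtain ⟨hYne, hYS, -⟩ := hY.1
  constructor
  · intro T
    constructor
    · rintro ⟨hT, hIT, hTS⟩
      by_cases hTeq : T = S
      · right
        exact ⟨hT, Set.union_subset hIT (hTeq ▸ hYS), hTS⟩
      · rcases hSSD S hS T hT ⟨hTS, fun h => hTeq (subset_antisymm hTS h)⟩ Y hY with h | h | h
        · exfalso
          obtain ⟨x, hx⟩ := hI
          have : x ∈ Y ∩ I := ⟨h (hIT hx), hx⟩
          rw [hYI] at this; exact this
        · right; exact ⟨hT, Set.union_subset hIT h, hTS⟩
        · left
          refine ⟨hT, hIT, fun x hx => ⟨hTS hx, fun hxY => ?_⟩⟩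
          have : x ∈ Y ∩ T := ⟨hxY, hx⟩
          rw [h] at this; exact this
    · rintro (⟨hT, hIT, hTS⟩ | ⟨hT, hIT, hTS⟩)
      · exact ⟨hT, hIT, hTS.trans Set.diff_subset⟩
      · exact ⟨hT, (Set.subset_union_left.trans hIT), hTS⟩
  · rintro T ⟨⟨_, _, h1⟩, ⟨_, h2, _⟩⟩
    obtain ⟨y, hy⟩ := hYne
    exact (h1 (h2 (Set.mem_union_right I hy))).2 hy
end
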